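/- If α ⊑ β for finite LPOFs, then the extensible nodes of α are exactly those extensible nodes x of β such that φ_β(x) does not imply stuck_α; in particular extens_α ⊆ extens_β. -/

import Mathlib

/-! ## Boolean formulae over node variables -/

inductive Form where
  | top : Form
  | bot : Form
  | conj : Form → Form → Form
  | disj : Form → Form → Form
  | neg : Form → Form
  | var : ℕ → Form

def Form.sat (v : ℕ → Bool) : Form → Prop
  | .top => True
  | .bot => False
  | .conj a b => a.sat v ∧ b.sat v
  | .disj a b => a.sat v ∨ b.sat v
  | .neg a => ¬ a.sat v
  | .var x => v x = true

def Form.vars : Form → Set ℕ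
  | .top => ∅
  | .bot => ∅
  | .conj a b => a.vars ∪ b.vars
  | .disj a b => a.vars ∪ b.vars
  | .neg a => a.vars
  | .var x => {x}

def Form.rename (f : ℕ → ℕ) : Form → Form
  | .top => .top
  | .bot => .bot
  | .conj a b => .conj (a.rename f) (b.rename f)
  | .disj a b => .disj (a.rename f) (b.rename f)
  | .neg a => .neg (a.rename f)
  | .var x => .var (f x)

/-! ## Labels: a pointed, finitely preceded dcpo -/

class LabelDCPO (L : Type) extends PartialOrder L, OrderBot L where
  directedSupExists : ∀ S : Set L, S.Nonempty → DirectedOn (· ≤ ·) S → ∃ b, IsLUB S b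
  finitelyPreceded : ∀ l : L, {l' : L | l' < l}.Finite

/-- The level of a node: length of the longest strict chain ending at it. -/
noncomputable def levOf (lt : ℕ → ℕ → Prop) (x : ℕ) : ℕ :=
  sSup {n | ∃ c : ℕ → ℕ, c n = x ∧ ∀ i < n, lt (c i) (c (i + 1))}

/-! ## Labelled partial orders with formulae -/

structure LPOF (L : Type) [LabelDCPO L] where
  N : Set ℕ
  lt : ℕ → ℕ → Prop
  lab : ℕ → L
  form : ℕ → Form
  lt_mem : ∀ {x y}, lt x y → x ∈ N ∧ y ∈ N
  lt_trans : ∀ {x y z}, lt x y → lt y z → lt x z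
  lt_irrefl : ∀ x, ¬ lt x x
  finPred : ∀ x, {y | lt y x}.Finite
  finLevel : ∀ n, {x ∈ N | levOf lt x = n}.Finite
  singleRoot : ∃! r, r ∈ N ∧ ∀ y, ¬ lt y r
  bot_maximal : ∀ x ∈ N, lab x = ⊥ → ∀ y, ¬ lt x y
  form_sat : ∀ x ∈ N, ∃ v, (form x).sat v
  form_free : ∀ x ∈ N, ∀ y ∈ (form x).vars, lt y x
  form_impl : ∀ {x y}, lt x y → ∀ v, (form y).sat v → (form x).sat v
  lab_junk : ∀ x, x ∉ N → lab x = ⊥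
  form_junk : ∀ x, x ∉ N → form x = Form.top

variable {L : Type} [LabelDCPO L]

/-- The set of ⊥-labelled nodes. -/
def LPOF.Bot (α : LPOF L) : Set ℕ := {x ∈ α.N | α.lab x = ⊥}

/-- Strict successors of a set of nodes. -/
def LPOF.succPlus (α : LPOF L) (X : Set ℕ) : Set ℕ := {y | ∃ x ∈ X, α.lt x y}

/-- Immediate successors of a node. -/
def LPOF.succs (α : LPOF L) (x : ℕ) : Set ℕ :=
  {y | α.lt x y ∧ ¬ ∃ z, α.lt x z ∧ α.lt z y}

/-- The order ⊑ on LPOFs. -/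
def LPOF.le (α β : LPOF L) : Prop :=
  α.N ⊆ β.N ∧
  (∀ x ∈ α.N, ∀ y, β.lt y x → y ∈ α.N) ∧
  (∀ x y, α.lt x y ↔ (β.lt x y ∧ x ∈ α.N ∧ y ∈ α.N)) ∧
  (∀ x ∈ α.N, α.lab x ≤ β.lab x) ∧
  (∀ x ∈ α.N, α.form x = β.form x) ∧
  (∀ x ∈ α.N, α.succs x = β.succs x \ β.succPlus α.Bot)

/-! ## Generic suprema w.r.t. a relation -/

def isUB {X : Type*} (le : X → X → Prop) (D : Set X) (b : X) : Prop :=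
  ∀ a ∈ D, le a b

def isSup {X : Type*} (le : X → X → Prop) (D : Set X) (b : X) : Prop :=
  isUB le D b ∧ ∀ c, isUB le D c → le b c

/-! ## Isomorphism and pomsets with formulae -/

def LPOF.iso (α β : LPOF L) : Prop :=
  ∃ f : ℕ → ℕ, Set.BijOn f α.N β.N ∧
    (∀ x ∈ α.N, ∀ y ∈ α.N, (α.lt x y ↔ β.lt (f x) (f y))) ∧
    (∀ x ∈ α.N, β.lab (f x) = α.lab x) ∧
    (∀ x ∈ α.N, β.form (f x) = (α.form x).rename f)

def isoClass (α : LPOF L) : Set (LPOF L) := {β | α.iso β}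

def Pom (L : Type) [LabelDCPO L] : Type := {A : Set (LPOF L) // ∃ α, A = isoClass α}

def pomLe (A B : Pom L) : Prop := ∀ α ∈ A.1, ∃ β ∈ B.1, LPOF.le α β

def PomFinite (A : Pom L) : Prop := ∀ α ∈ A.1, α.N.Finite

/-! ## The singleton ⊥ LPOF and the bottom pomset -/

def botLPOF (x₀ : ℕ) : LPOF L where
  N := {x₀}
  lt _ _ := False
  lab _ := ⊥
  form _ := Form.top
  lt_mem h := h.elim
  lt_trans h _ := h.elim
  lt_irrefl _ h := h
  finPred _ := Set.finite_empty.subset (by intro y hy; exact hy.elim)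
  finLevel _ := (Set.finite_singleton x₀).subset (fun y hy => hy.1)
  singleRoot := ⟨x₀, ⟨rfl, fun _ h => h⟩, fun r hr => hr.1⟩
  bot_maximal _ _ _ _ h := h
  form_sat _ _ := ⟨fun _ => true, by simp [Form.sat]⟩
  form_free _ _ y hy := by simp [Form.vars] at hy
  form_impl h := h.elim
  lab_junk _ _ := rfl
  form_junk _ _ := rfl

def botPom : Pom L := ⟨isoClass (botLPOF 0), ⟨botLPOF 0, rfl⟩⟩

/-! ## Stuck formulae, extensible nodes, branches (semantically) -/

def stuckSat (α : LPOF L) (v : ℕ → Bool) : Prop :=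
  ∃ x ∈ α.N, α.lab x = ⊥ ∧ (α.form x).sat v

def extens (α : LPOF L) : Set ℕ :=
  {x ∈ α.N | ¬ ∀ v, (α.form x).sat v → stuckSat α v}

def branchSat (α : LPOF L) (S : Set ℕ) (v : ℕ → Bool) : Prop :=
  ∀ x ∈ S, (α.form x).sat v

def IsBranch (α : LPOF L) (S : Set ℕ) : Prop :=
  S.Nonempty ∧ S ⊆ extens α ∧
  (∀ v, branchSat α S v → ¬ stuckSat α v) ∧
  (∀ T, S ⊂ T → T ⊆ extens α → ¬ ∃ v, branchSat α T v)

def brSet (α : LPOF L) : Set ((ℕ → Bool) → Prop) :=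
  {p | ∃ S, IsBranch α S ∧ p = branchSat α S}

/-! ## Truncation (relationally) -/

def IsTrunc (α : LPOF L) (n : ℕ) (β : LPOF L) : Prop :=
  β.N = {x ∈ α.N | levOf α.lt x ≤ n} ∧
  (∀ x y, β.lt x y ↔ (α.lt x y ∧ x ∈ β.N ∧ y ∈ β.N)) ∧
  (∀ x ∈ β.N, (levOf α.lt x < n → β.lab x = α.lab x) ∧
    (levOf α.lt x = n → β.lab x = ⊥)) ∧
  (∀ x ∈ β.N, β.form x = α.form x)

/-! ## Guarded choice (relationally) -/

def IsGuard (x₀ : ℕ) (ℓ : L) (α β γ : LPOF L) : Prop :=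
  γ.N = insert x₀ (α.N ∪ β.N) ∧
  (∀ a b, γ.lt a b ↔ (α.lt a b ∨ β.lt a b ∨ (a = x₀ ∧ b ∈ α.N ∪ β.N))) ∧
  γ.lab x₀ = ℓ ∧
  (∀ y ∈ α.N, γ.lab y = α.lab y) ∧
  (∀ y ∈ β.N, γ.lab y = β.lab y) ∧
  γ.form x₀ = Form.top ∧
  (∀ y ∈ α.N, γ.form y = Form.conj (α.form y) (Form.var x₀)) ∧
  (∀ y ∈ β.N, γ.form y = Form.conj (β.form y) (Form.neg (Form.var x₀)))

def setLe (A B : Set (LPOF L)) : Prop := ∀ α ∈ A, ∃ β ∈ B, LPOF.le α β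

def guardSet (ℓ : L) (A B : Set (LPOF L)) : Set (LPOF L) :=
  {γ | ∃ x₀ α β, α ∈ A ∧ β ∈ B ∧ Disjoint α.N β.N ∧ x₀ ∉ α.N ∧ x₀ ∉ β.N ∧
    IsGuard x₀ ℓ α β γ}

/-! ## Sequential composition (relationally) -/

def CopyFn (α β : LPOF L) (f : Set ℕ → LPOF L) : Prop :=
  ∀ S, IsBranch α S →
    β.iso (f S) ∧ Disjoint (f S).N α.N ∧
    ∀ S', IsBranch α S' → S ≠ S' → Disjoint (f S).N (f S').N

def IsSeq (α β : LPOF L) (f : Set ℕ → LPOF L) (γ : LPOF L) : Prop :=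
  (γ.N = α.N ∪ ⋃ S ∈ {S : Set ℕ | IsBranch α S}, (f S).N) ∧
  (∀ a b, γ.lt a b ↔ (α.lt a b ∨ ∃ S, IsBranch α S ∧
    ((f S).lt a b ∨
      (a ∈ α.N ∧ (∀ v, branchSat α S v → (α.form a).sat v) ∧ b ∈ (f S).N)))) ∧
  (∀ x ∈ α.N, γ.lab x = α.lab x ∧ γ.form x = α.form x) ∧
  (∀ S, IsBranch α S → ∀ x ∈ (f S).N,
    γ.lab x = (f S).lab x ∧
    ∀ v, (γ.form x).sat v ↔ (((f S).form x).sat v ∧ branchSat α S v))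

def seqSet (A B : Set (LPOF L)) : Set (LPOF L) :=
  {γ | ∃ α ∈ A, ∃ β ∈ B, ∃ f, CopyFn α β f ∧ IsSeq α β f γ}

/-! ## Way-below and compactness in Pom(L) -/

def wayBelow (A B : Pom L) : Prop :=
  ∀ D : Set (Pom L), D.Nonempty → DirectedOn pomLe D →
    ∀ S, isSup pomLe D S → pomLe B S → ∃ C ∈ D, pomLe A C

def pomCompact (A : Pom L) : Prop := wayBelow A A


/-! Every node of β outside α lies strictly above a ⊥-node of α: walking down from it along
immediate predecessors (the order is well founded, predecessor sets being finite) one must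
re-enter α, since the roots agree, and by the successor clause of ⊑ the first step out of α
starts at a ⊥-node. Hence the formula of such a node implies stuck_α, and so does stuck_β;
on the nodes of α the formulae of α and β coincide. -/

namespace LPOF

variable (α : LPOF L)

lemma ncard_pred_lt_ncard_pred {a b : ℕ} (hab : α.lt a b) :
    {y | α.lt y a}.ncard < {y | α.lt y b}.ncard :=
  Set.ncard_lt_ncard
    (Set.ssubset_iff_of_subset (fun _ hy => α.lt_trans hy hab) |>.mpr
      ⟨a, hab, α.lt_irrefl a⟩)
    (α.finPred b)

lemma wellFounded_lt : WellFounded α.lt :=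
  Subrelation.wf (fun {_ _} hab => α.ncard_pred_lt_ncard_pred hab)
    (measure fun x => {y | α.lt y x}.ncard).wf

/-- A predecessor with the most predecessors of its own is an immediate one. -/
lemma exists_mem_succs_of_lt {y z : ℕ} (hzy : α.lt z y) : ∃ w, y ∈ α.succs w := by
  obtain ⟨w, hwy, hmax⟩ := Set.exists_max_image {x | α.lt x y} (fun x => {u | α.lt u x}.ncard)
    (α.finPred y) ⟨z, hzy⟩
  refine ⟨w, hwy, ?_⟩
  rintro ⟨u, hwu, huy⟩
  exact (hmax u huy).not_gt (α.ncard_pred_lt_ncard_pred hwu)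

end LPOF

namespace LPOF.le

variable {α β : LPOF L} (h : α.le β)
include h

lemma N_subset : α.N ⊆ β.N := h.1

lemma form_eq {x : ℕ} (hx : x ∈ α.N) : α.form x = β.form x := h.2.2.2.2.1 x hx

lemma lab_le {x : ℕ} (hx : x ∈ α.N) : α.lab x ≤ β.lab x := h.2.2.2.1 x hx

lemma succs_eq {x : ℕ} (hx : x ∈ α.N) : α.succs x = β.succs x \ β.succPlus α.Bot :=
  h.2.2.2.2.2 x hx

lemma mem_of_forall_not_lt {y : ℕ} (hy : y ∈ β.N) (hmin : ∀ z, ¬ β.lt z y) : y ∈ α.N := by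
  obtain ⟨hsub, hdown, hlt, -⟩ := h
  obtain ⟨r, ⟨hr, hrmin⟩, -⟩ := α.singleRoot
  obtain ⟨rβ, -, hrβ⟩ := β.singleRoot
  have hrβmin : ∀ z, ¬ β.lt z r := fun z hz =>
    hrmin z ((hlt z r).mpr ⟨hz, hdown r hr z hz, hr⟩)
  rwa [hrβ y ⟨hy, hmin⟩, ← hrβ r ⟨hsub hr, hrβmin⟩]

lemma mem_succPlus_bot_of_not_mem {y : ℕ} (hy : y ∈ β.N) (hyα : y ∉ α.N) :
    y ∈ β.succPlus α.Bot := by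
  induction y using β.wellFounded_lt.induction with
  | _ y ih =>
  obtain ⟨z, hzy⟩ : ∃ z, β.lt z y := by
    by_contra! hmin
    exact hyα (h.mem_of_forall_not_lt hy hmin)
  obtain ⟨w, hwy, hw⟩ := β.exists_mem_succs_of_lt hzy
  by_cases hwα : w ∈ α.N
  · have hyα' : y ∉ α.succs w := fun hy' => hyα (α.lt_mem hy'.1).2
    rw [h.succs_eq hwα] at hyα'
    by_contra hnot
    exact hyα' ⟨⟨hwy, hw⟩, hnot⟩
  · obtain ⟨z, hz, hzw⟩ := ih w hwy (β.lt_mem hwy).1 hwα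
    exact ⟨z, hz, β.lt_trans hzw hwy⟩

lemma stuckSat_of_sat_of_not_mem {y : ℕ} {v : ℕ → Bool} (hy : y ∈ β.N) (hyα : y ∉ α.N)
    (hv : (β.form y).sat v) : stuckSat α v := by
  obtain ⟨z, ⟨hz, hzbot⟩, hzy⟩ := h.mem_succPlus_bot_of_not_mem hy hyα
  exact ⟨z, hz, hzbot, h.form_eq hz ▸ β.form_impl hzy v hv⟩

lemma stuckSat_of_stuckSat {v : ℕ → Bool} (hv : stuckSat β v) : stuckSat α v := by
  obtain ⟨y, hy, hybot, hyv⟩ := hv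
  by_cases hyα : y ∈ α.N
  · exact ⟨y, hyα, le_bot_iff.mp (hybot ▸ h.lab_le hyα), h.form_eq hyα ▸ hyv⟩
  · exact h.stuckSat_of_sat_of_not_mem hy hyα hyv

end LPOF.le

theorem stmt11_general {L : Type} [LabelDCPO L] (α β : LPOF L)
    (h : LPOF.le α β) :
    extens α = {x ∈ extens β | ¬ ∀ v, (β.form x).sat v → stuckSat α v} ∧
    extens α ⊆ extens β := by
  have heq : extens α = {x ∈ extens β | ¬ ∀ v, (β.form x).sat v → stuckSat α v} := by
    ext x
    constructor
    · rintro ⟨hx, hnot⟩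
      rw [h.form_eq hx] at hnot
      exact ⟨⟨h.N_subset hx, fun hall => hnot fun v hv => h.stuckSat_of_stuckSat (hall v hv)⟩, hnot⟩
    · rintro ⟨⟨hxβ, -⟩, hnot⟩
      have hx : x ∈ α.N := by
        by_contra hxα
        exact hnot fun v hv => h.stuckSat_of_sat_of_not_mem hxβ hxα hv
      exact ⟨hx, h.form_eq hx ▸ hnot⟩
  exact ⟨heq, heq ▸ fun x hx => hx.1⟩

/-- for finite LPOFs with α ⊑ β, the extensible nodes of α are
exactly the extensible nodes x of β whose formula does not imply stuck_α;
in particular extens α ⊆ extens β. -/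
theorem stmt11 {L : Type} [LabelDCPO L] (α β : LPOF L)
    (hαfin : α.N.Finite) (hβfin : β.N.Finite) (h : LPOF.le α β) :
    extens α = {x ∈ extens β | ¬ ∀ v, (β.form x).sat v → stuckSat α v} ∧
    extens α ⊆ extens β :=
  stmt11_general α β h
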